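/- arXiv:2008.12022 — 2 statements merged into one kernel-verified Lean document; each statement's English description precedes it below -/
import Mathlib

section
/- Let G be a finite simple graph on Fin n with edge weights w, let L(w) be the signed weighted Laplacian of (G, w), and let G⁻ be the spanning subgraph consisting of those edges e with w_e < 0. (a) If G⁻ is disconnected (as a spanning subgraph on all n vertices), then there exists a nonzero x : Fin n → ℝ with ∑_i x_i = 0 and xᵀ L(w) x ≥ 0; in particular L(w) is not negative definite on mean-zero vectors. (b) If moreover some edge e of G with w_e > 0 joins two vertices lying in distinct connected components of G⁻, then L(w) has a strictly positive eigenvalue. -/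
open Matrix

/-- The signed weighted Laplacian of a simple graph `G` on `Fin n` with real edge
weights `w` (with `w i j = w j i` on edges). -/
def signedLaplacian {n : ℕ} (G : SimpleGraph (Fin n)) [DecidableRel G.Adj]
    (w : Fin n → Fin n → ℝ) : Matrix (Fin n) (Fin n) ℝ :=
  fun i j =>
    if i = j then ∑ k ∈ G.neighborFinset i, w i k
    else if G.Adj i j then -w i j else 0

/-- The spanning subgraph `G⁻` of `G` consisting of the edges with strictly negative
weight. -/
def negSubgraph {n : ℕ} (G : SimpleGraph (Fin n)) (w : Fin n → Fin n → ℝ) :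
    SimpleGraph (Fin n) where
  Adj i j := G.Adj i j ∧ w i j < 0 ∧ w j i < 0
  symm := ⟨fun _ _ ⟨h, h1, h2⟩ => ⟨h.symm, h2, h1⟩⟩
  loopless := ⟨fun i ⟨h, _, _⟩ => G.loopless.irrefl i h⟩

/-!
Let `S` be the vertex set of a connected component of `G⁻` (or any union of them) that misses
some vertex. The vector `x = n • 𝟙_S - #S • 𝟙` has mean zero, and
`xᵀ L x = ∑ᵢ ∑_{j ~ i} w i j * x i * (x i - x j)`. Terms of edges inside `S` or inside its
complement vanish, and every edge crossing `S` is not in `G⁻`, so has weight `≥ 0` and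
contributes `≥ 0`; a positive crossing edge makes the form strictly positive. A symmetric
matrix whose quadratic form takes a positive value has a positive eigenvalue, since otherwise
`-L` would be positive semidefinite.
-/

open Finset

theorem Matrix.IsHermitian.exists_pos_eigenvalue_of_dotProduct_mulVec_pos {ι : Type*}
    [Fintype ι] [DecidableEq ι] {A : Matrix ι ι ℝ} (hA : A.IsHermitian) {x : ι → ℝ}
    (hx : 0 < x ⬝ᵥ A *ᵥ x) :
    ∃ μ : ℝ, 0 < μ ∧ ∃ v : ι → ℝ, v ≠ 0 ∧ A *ᵥ v = μ • v := by
  by_contra! hA'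
  have hneg : (-A).IsHermitian := hA.neg
  have hpsd : (-A).PosSemidef := hneg.posSemidef_iff_eigenvalues_nonneg.mpr fun k => by
    refine le_of_not_gt fun hk => hA' _ (neg_pos.mpr hk) _
      ((WithLp.ofLp_eq_zero 2).ne.mpr <| hneg.eigenvectorBasis.orthonormal.ne_zero k) ?_
    rw [neg_smul, ← hneg.mulVec_eigenvectorBasis k, neg_mulVec, neg_neg]
  have := hpsd.dotProduct_mulVec_nonneg x
  rw [star_trivial, neg_mulVec, dotProduct_neg] at this
  linarith

section signedLaplacian

variable {n : ℕ} {G : SimpleGraph (Fin n)} [DecidableRel G.Adj] {w : Fin n → Fin n → ℝ}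

theorem isHermitian_signedLaplacian (hsymm : ∀ i j, w i j = w j i) :
    (signedLaplacian G w).IsHermitian := by
  ext i j
  by_cases h : i = j
  · subst h; rfl
  · simp [signedLaplacian, h, Ne.symm h, G.adj_comm, hsymm i j]

theorem signedLaplacian_mulVec_apply (x : Fin n → ℝ) (i : Fin n) :
    (signedLaplacian G w *ᵥ x) i = ∑ j ∈ G.neighborFinset i, w i j * (x i - x j) := by
  calc (signedLaplacian G w *ᵥ x) i
      = ∑ j, signedLaplacian G w i j * x j := rfl
    _ = ∑ j, ((if i = j then (∑ k ∈ G.neighborFinset i, w i k) * x j else 0)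
          + if G.Adj i j then -w i j * x j else 0) :=
        sum_congr rfl fun j _ => by
          by_cases h : i = j
          · subst h; simp [signedLaplacian]
          · simp [signedLaplacian, h, ite_mul]
    _ = (∑ k ∈ G.neighborFinset i, w i k) * x i
          + ∑ j ∈ G.neighborFinset i, -w i j * x j := by
        rw [sum_add_distrib, sum_ite_eq, ← sum_filter]
        simp [SimpleGraph.neighborFinset_eq_filter]
    _ = ∑ j ∈ G.neighborFinset i, w i j * (x i - x j) := by
        simp only [sum_mul, ← sum_add_distrib, mul_sub]
        exact sum_congr rfl fun j _ => by ring

theorem dotProduct_signedLaplacian_mulVec (x : Fin n → ℝ) :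
    x ⬝ᵥ signedLaplacian G w *ᵥ x =
      ∑ i, ∑ j ∈ G.neighborFinset i, w i j * (x i * (x i - x j)) := by
  simp only [dotProduct, signedLaplacian_mulVec_apply, mul_sum]
  exact sum_congr rfl fun i _ => sum_congr rfl fun j _ => by ring

end signedLaplacian

section cutVector

variable {n : ℕ}

def cutVector (S : Finset (Fin n)) (i : Fin n) : ℝ :=
  if i ∈ S then n - #S else -#S

theorem sum_cutVector (S : Finset (Fin n)) : ∑ i, cutVector S i = 0 := by
  have hcompl : ((#Sᶜ : ℕ) : ℝ) = n - #S := by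
    rw [card_compl, Fintype.card_fin, Nat.cast_sub (by simpa using card_le_univ S)]
  rw [← sum_add_sum_compl S]
  simp only [cutVector]
  rw [sum_ite_of_true (fun i hi => hi), sum_ite_of_false (fun i hi => mem_compl.mp hi)]
  simp only [sum_const, nsmul_eq_mul, hcompl]
  ring

variable {S : Finset (Fin n)} {a b : Fin n}

theorem cutVector_sub_cutVector (ha : a ∈ S) (hb : b ∉ S) :
    cutVector S a - cutVector S b = n := by
  simp [cutVector, ha, hb]

theorem cutVector_ne_zero (ha : a ∈ S) (hb : b ∉ S) : cutVector S ≠ 0 := by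
  intro h
  have := cutVector_sub_cutVector ha hb
  simp only [h, Pi.zero_apply, sub_zero] at this
  exact (Fin.pos a).ne' (by exact_mod_cast this.symm)

theorem cutVector_mul_sub_nonneg (i j : Fin n) :
    0 ≤ cutVector S i * (cutVector S i - cutVector S j) := by
  have : (#S : ℝ) ≤ n := by exact_mod_cast (by simpa using card_le_univ S)
  unfold cutVector
  split_ifs <;> nlinarith

theorem cutVector_mul_sub_pos (ha : a ∈ S) (hb : b ∉ S) :
    0 < cutVector S a * (cutVector S a - cutVector S b) := by
  have : (#S : ℝ) < n := by exact_mod_cast (by simpa using card_lt_univ_of_notMem hb)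
  rw [cutVector_sub_cutVector ha hb, cutVector, if_pos ha]
  exact mul_pos (sub_pos.mpr this) (Nat.cast_pos.mpr (Fin.pos a))

end cutVector

section cut

variable {n : ℕ} {G : SimpleGraph (Fin n)} {w : Fin n → Fin n → ℝ} {S : Finset (Fin n)}

theorem exists_cut_of_not_reachable (hsymm : ∀ i j, w i j = w j i) {a b : Fin n}
    (hab : ¬ (negSubgraph G w).Reachable a b) :
    ∃ S : Finset (Fin n), a ∈ S ∧ b ∉ S ∧
      ∀ i j, G.Adj i j → w i j < 0 → (i ∈ S ↔ j ∈ S) := by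
  classical
  refine ⟨({i | (negSubgraph G w).Reachable a i} : Finset (Fin n)), by simp, by simpa using hab,
    fun i j hij hw => ?_⟩
  have hneg : (negSubgraph G w).Adj i j := ⟨hij, hw, hsymm i j ▸ hw⟩
  simpa using ⟨fun h => h.trans hneg.reachable, fun h => h.trans hneg.symm.reachable⟩

theorem weight_mul_cutVector_nonneg
    (hS : ∀ i j, G.Adj i j → w i j < 0 → (i ∈ S ↔ j ∈ S)) {i j : Fin n}
    (hij : G.Adj i j) :
    0 ≤ w i j * (cutVector S i * (cutVector S i - cutVector S j)) := by
  rcases lt_or_ge (w i j) 0 with hw | hw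
  · have : cutVector S i = cutVector S j := by simp [cutVector, hS i j hij hw]
    simp [this]
  · exact mul_nonneg hw (cutVector_mul_sub_nonneg i j)

variable [DecidableRel G.Adj]

theorem dotProduct_signedLaplacian_mulVec_cutVector_nonneg
    (hS : ∀ i j, G.Adj i j → w i j < 0 → (i ∈ S ↔ j ∈ S)) :
    0 ≤ cutVector S ⬝ᵥ signedLaplacian G w *ᵥ cutVector S := by
  rw [dotProduct_signedLaplacian_mulVec]
  exact sum_nonneg fun i _ => sum_nonneg fun j hj =>
    weight_mul_cutVector_nonneg hS ((G.mem_neighborFinset i j).mp hj)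

theorem dotProduct_signedLaplacian_mulVec_cutVector_pos
    (hS : ∀ i j, G.Adj i j → w i j < 0 → (i ∈ S ↔ j ∈ S)) {a b : Fin n} (ha : a ∈ S)
    (hb : b ∉ S) (hab : G.Adj a b) (hw : 0 < w a b) :
    0 < cutVector S ⬝ᵥ signedLaplacian G w *ᵥ cutVector S := by
  rw [dotProduct_signedLaplacian_mulVec]
  have hterm : ∀ i, ∀ j ∈ G.neighborFinset i,
      0 ≤ w i j * (cutVector S i * (cutVector S i - cutVector S j)) := fun i j hj =>
    weight_mul_cutVector_nonneg hS ((G.mem_neighborFinset i j).mp hj)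
  refine sum_pos' (fun i _ => sum_nonneg (hterm i)) ⟨a, mem_univ a, ?_⟩
  exact sum_pos' (hterm a) ⟨b, (G.mem_neighborFinset a b).mpr hab,
    mul_pos hw (cutVector_mul_sub_pos ha hb)⟩

end cut

/-- (a) If the subgraph `G⁻` of negatively weighted edges is
disconnected, the signed Laplacian is not negative definite on mean-zero vectors;
(b) if additionally some positively weighted edge of `G` joins two distinct connected
components of `G⁻`, then the signed Laplacian has a strictly positive eigenvalue. -/
theorem disconnected_negative_part (n : ℕ)
    (G : SimpleGraph (Fin n)) [DecidableRel G.Adj]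
    (w : Fin n → Fin n → ℝ) (hsymm : ∀ i j : Fin n, w i j = w j i)
    (hdis : ¬ (negSubgraph G w).Preconnected) :
    (∃ x : Fin n → ℝ, x ≠ 0 ∧ ∑ i, x i = 0 ∧
        0 ≤ x ⬝ᵥ (signedLaplacian G w).mulVec x) ∧
    ((∃ i j : Fin n, G.Adj i j ∧ 0 < w i j ∧ ¬ (negSubgraph G w).Reachable i j) →
      ∃ μ : ℝ, 0 < μ ∧ ∃ v : Fin n → ℝ, v ≠ 0 ∧
        (signedLaplacian G w).mulVec v = μ • v) := by
  constructor
  · obtain ⟨a, b, hab⟩ : ∃ a b, ¬ (negSubgraph G w).Reachable a b := by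
      simpa [SimpleGraph.Preconnected] using hdis
    obtain ⟨S, ha, hb, hS⟩ := exists_cut_of_not_reachable hsymm hab
    exact ⟨cutVector S, cutVector_ne_zero ha hb, sum_cutVector S,
      dotProduct_signedLaplacian_mulVec_cutVector_nonneg hS⟩
  · rintro ⟨a, b, hadj, hw, hab⟩
    obtain ⟨S, ha, hb, hS⟩ := exists_cut_of_not_reachable hsymm hab
    exact (isHermitian_signedLaplacian hsymm).exists_pos_eigenvalue_of_dotProduct_mulVec_pos
      (dotProduct_signedLaplacian_mulVec_cutVector_pos hS ha hb hadj hw)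
end

section
/- Let L⁺ and L⁻ be real symmetric positive semidefinite n×n matrices, and let i ≠ j be two indices. Suppose there exist u, v ∈ ℝⁿ with L⁺ u = e_i - e_j and L⁻ v = e_i - e_j (where e_i, e_j are standard basis vectors). If (e_i - e_j)ᵀ v > (e_i - e_j)ᵀ u, i.e. v_i - v_j > u_i - u_j, then the symmetric matrix L⁺ - L⁻ has a strictly positive eigenvalue. -/
/-!
Since `L⁺ - L⁻` is symmetric, it suffices to find `x` with `xᵀ (L⁺ - L⁻) x > 0`: otherwise all
its eigenvalues are `≤ 0` and it is negative semidefinite. Take `x = v`. Expanding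
`(v - u)ᵀ L⁺ (v - u) ≥ 0` with `L⁺ u = e_i - e_j` gives `vᵀ L⁺ v ≥ 2 (v_i - v_j) - (u_i - u_j)`
(Thomson's principle), while `vᵀ L⁻ v = v_i - v_j`; so `vᵀ (L⁺ - L⁻) v ≥ (v_i - v_j) - (u_i - u_j) > 0`.
-/

open Matrix
open scoped ComplexOrder

namespace Matrix

section Hermitian

variable {n 𝕜 : Type*} [Fintype n] [DecidableEq n] [RCLike 𝕜] {A : Matrix n n 𝕜}

theorem IsHermitian.exists_eigenvalues_pos_of_re_dotProduct_mulVec_pos (hA : A.IsHermitian)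
    {x : n → 𝕜} (hx : 0 < RCLike.re (star x ⬝ᵥ (A *ᵥ x))) : ∃ k, 0 < hA.eigenvalues k := by
  by_contra! h
  have hneg : (-A).PosSemidef := by
    refine posSemidef_iff_isHermitian_and_spectrum_nonneg.mpr ⟨hA.neg, fun a ha => ?_⟩
    rw [← spectrum.neg_eq, Set.mem_neg, hA.spectrum_eq_image_range] at ha
    obtain ⟨_, ⟨k, rfl⟩, hk⟩ := ha
    rw [Set.mem_ofPred_eq, ← neg_neg a, ← hk, neg_nonneg]
    exact_mod_cast h k
  have := hneg.re_dotProduct_nonneg x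
  simp only [neg_mulVec, dotProduct_neg, map_neg, neg_nonneg] at this
  exact this.not_gt hx

theorem IsHermitian.exists_pos_eigenvalue_of_re_dotProduct_mulVec_pos (hA : A.IsHermitian)
    {x : n → 𝕜} (hx : 0 < RCLike.re (star x ⬝ᵥ (A *ᵥ x))) :
    ∃ μ : ℝ, 0 < μ ∧ ∃ y : n → 𝕜, y ≠ 0 ∧ A *ᵥ y = μ • y := by
  obtain ⟨k, hk⟩ := hA.exists_eigenvalues_pos_of_re_dotProduct_mulVec_pos hx
  refine ⟨_, hk, _, fun h => hA.eigenvectorBasis.orthonormal.ne_zero k ?_,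
    hA.mulVec_eigenvectorBasis k⟩
  exact WithLp.ofLp_injective _ h

end Hermitian

variable {n : Type*} [Fintype n]

theorem PosSemidef.two_mul_dotProduct_sub_le {L : Matrix n n ℝ} (hL : L.PosSemidef)
    {u b : n → ℝ} (hu : L *ᵥ u = b) (v : n → ℝ) :
    2 * (v ⬝ᵥ b) - u ⬝ᵥ b ≤ v ⬝ᵥ (L *ᵥ v) := by
  have hsymm : u ⬝ᵥ (L *ᵥ v) = v ⬝ᵥ b := by
    rw [dotProduct_mulVec, ← mulVec_transpose, ← conjTranspose_eq_transpose_of_trivial,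
      hL.isHermitian.eq, hu, dotProduct_comm]
  have := hL.dotProduct_mulVec_nonneg (v - u)
  simp only [star_trivial, mulVec_sub, dotProduct_sub, sub_dotProduct, hu, hsymm] at this
  linarith

theorem dotProduct_single_one_sub_single_one [DecidableEq n] (x : n → ℝ) (i j : n) :
    x ⬝ᵥ (Pi.single i 1 - Pi.single j 1) = x i - x j := by
  simp [dotProduct_sub, dotProduct_single]

end Matrix

theorem resistance_comparison_instability_general (n : ℕ)
    (Lp Lm : Matrix (Fin n) (Fin n) ℝ)
    (hLp : Lp.PosSemidef) (hLm : Lm.PosSemidef)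
    (i j : Fin n)
    (u v : Fin n → ℝ)
    (hu : Lp.mulVec u = Pi.single i 1 - Pi.single j 1)
    (hv : Lm.mulVec v = Pi.single i 1 - Pi.single j 1)
    (hres : u i - u j < v i - v j) :
    ∃ μ : ℝ, 0 < μ ∧ ∃ x : Fin n → ℝ, x ≠ 0 ∧ (Lp - Lm).mulVec x = μ • x := by
  refine (hLp.isHermitian.sub hLm.isHermitian).exists_pos_eigenvalue_of_re_dotProduct_mulVec_pos
    (x := v) ?_
  have hLp_energy := hLp.two_mul_dotProduct_sub_le hu v
  rw [dotProduct_single_one_sub_single_one, dotProduct_single_one_sub_single_one] at hLp_energy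
  rw [RCLike.re_to_real, star_trivial, sub_mulVec, dotProduct_sub, hv,
    dotProduct_single_one_sub_single_one]
  linarith

/-- If L⁺ and L⁻ are positive semidefinite, L⁺u = L⁻v = e_i - e_j, and
the effective resistance v_i - v_j in L⁻ exceeds the effective resistance u_i - u_j
in L⁺, then L⁺ - L⁻ has a strictly positive eigenvalue. -/
theorem resistance_comparison_instability (n : ℕ)
    (Lp Lm : Matrix (Fin n) (Fin n) ℝ)
    (hLp : Lp.PosSemidef) (hLm : Lm.PosSemidef)
    (i j : Fin n) (hij : i ≠ j)
    (u v : Fin n → ℝ)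
    (hu : Lp.mulVec u = Pi.single i 1 - Pi.single j 1)
    (hv : Lm.mulVec v = Pi.single i 1 - Pi.single j 1)
    (hres : u i - u j < v i - v j) :
    ∃ μ : ℝ, 0 < μ ∧ ∃ x : Fin n → ℝ, x ≠ 0 ∧ (Lp - Lm).mulVec x = μ • x :=
  resistance_comparison_instability_general n Lp Lm hLp hLm i j u v hu hv hres
end
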